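/- Let $(p_n)_{n \ge n_0}$ be a sequence in $(0,1)$ and let $p, p^* \in (0,1)$ and a positive integer $C$ satisfy: $p_{n_0} \le p$, $p(1-p^*)^{1-C} = p^*$, $p \le p^*$, and for every $n > n_0$, $p_n \le p / \prod_{k=\max(n_0, n+1-C)}^{n-1} (1 - p_k)$. Then $p_n \le p^*$ for all $n \ge n_0$. -/
import Mathlib

/-- Induction lemma for the false alarm rate bound: if `p n₀ ≤ p`,
`p = p⋆ (1 - p⋆)^(C-1)` (i.e. `p (1-p⋆)^{1-C} = p⋆`), `p ≤ p⋆`, and each `p n`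
is bounded by `p` divided by the product of `1 - p k` over the previous `C - 1`
terms, then `p n ≤ p⋆` for all `n ≥ n₀`. -/
theorem stmt_9 (p : ℕ → ℝ) (n₀ : ℕ) (pv ps : ℝ) (C : ℕ) (hC : 1 ≤ C)
    (hrange : ∀ n, n₀ ≤ n → p n ∈ Set.Ioo (0 : ℝ) 1)
    (hpv : pv ∈ Set.Ioo (0 : ℝ) 1) (hps : ps ∈ Set.Ioo (0 : ℝ) 1)
    (h0 : p n₀ ≤ pv)
    (hfix : pv = ps * (1 - ps) ^ (C - 1))
    (hle : pv ≤ ps)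
    (hrec : ∀ n, n₀ < n →
      p n ≤ pv / ∏ k ∈ Finset.Ico (max n₀ (n + 1 - C)) n, (1 - p k)) :
    ∀ n, n₀ ≤ n → p n ≤ ps := by
  intro n hn
  induction n using Nat.strong_induction_on with
  | _ n ih =>
    rcases eq_or_lt_of_le hn with h | h
    · rw [← h]; exact h0.trans hle
    · have hrec' := hrec n h
      set s := Finset.Ico (max n₀ (n + 1 - C)) n with hs
      have hmem : ∀ k ∈ s, n₀ ≤ k ∧ k < n := by
        intro k hk
        simp only [hs, Finset.mem_Ico, max_le_iff, le_max_iff] at hk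
        exact ⟨hk.1.1, hk.2⟩
      have hcard : s.card ≤ C - 1 := by
        have h1 : n + 1 - C ≤ max n₀ (n + 1 - C) := le_max_right _ _
        have h2 : s.card = n - max n₀ (n + 1 - C) := Nat.card_Ico _ _
        omega
      have hps1 : (0 : ℝ) < 1 - ps := by linarith [hps.2]
      have hprod_ge : (1 - ps) ^ (C - 1) ≤ ∏ k ∈ s, (1 - p k) := by
        calc (1 - ps) ^ (C - 1) ≤ (1 - ps) ^ s.card :=
              pow_le_pow_of_le_one (le_of_lt hps1) (by linarith [hps.1]) hcard
          _ ≤ ∏ k ∈ s, (1 - p k) := by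
              rw [← Finset.prod_const]
              apply Finset.prod_le_prod
              · intro k _; linarith
              · intro k hk
                have := ih k (hmem k hk).2 (hmem k hk).1
                linarith
      have hpow_pos : (0 : ℝ) < (1 - ps) ^ (C - 1) := pow_pos hps1 _
      have : pv / ∏ k ∈ s, (1 - p k) ≤ pv / (1 - ps) ^ (C - 1) :=
        div_le_div_of_nonneg_left (le_of_lt hpv.1) hpow_pos hprod_ge
      have heq : pv / (1 - ps) ^ (C - 1) = ps := by
        rw [hfix]; field_simp
      linarith
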